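/- Let Λ = ℤ_p[[T]] and G a finite p-group. Let C ≃ [C^{b−1} → C^b] be a two-term complex of finitely generated free Λ[G]-modules (in degrees b−1 and b) whose cohomology groups are torsion over Λ. Then rank_{Λ[G]}(C^{b−1}) = rank_{Λ[G]}(C^b), and if moreover H^b(C) is finitely generated over ℤ_p, then H^{b−1}(C) = 0. -/

import Mathlib

/-- let `Λ = ℤ_p[[T]]`, `G` a finite `p`-group, and let
`C = [C^{b-1} → C^b]` be a two-term complex of finitely generated free
`Λ[G]`-modules whose cohomology groups (`ker d` and `coker d`) are torsion over
`Λ`.  Then the `Λ[G]`-ranks of the two terms agree, and if moreover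
`H^b(C) = coker d` is finitely generated over `ℤ_p`, then `H^{b-1}(C) = ker d = 0`. -/
theorem two_term_complex_rank_eq_and_ker_eq_bot.{u}
    (p : ℕ) [Fact p.Prime] (G : Type*) [Group G] [Fintype G] (hG : IsPGroup p G)
    (M N : Type u) [AddCommGroup M] [AddCommGroup N]
    [Module (MonoidAlgebra (PowerSeries ℤ_[p]) G) M]
    [Module (MonoidAlgebra (PowerSeries ℤ_[p]) G) N]
    [Module (PowerSeries ℤ_[p]) M]
    [IsScalarTower (PowerSeries ℤ_[p]) (MonoidAlgebra (PowerSeries ℤ_[p]) G) M]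
    [Module (PowerSeries ℤ_[p]) N]
    [IsScalarTower (PowerSeries ℤ_[p]) (MonoidAlgebra (PowerSeries ℤ_[p]) G) N]
    [Module ℤ_[p] N] [IsScalarTower ℤ_[p] (PowerSeries ℤ_[p]) N]
    [IsScalarTower ℤ_[p] (MonoidAlgebra (PowerSeries ℤ_[p]) G) N]
    [Module.Free (MonoidAlgebra (PowerSeries ℤ_[p]) G) M]
    [Module.Finite (MonoidAlgebra (PowerSeries ℤ_[p]) G) M]
    [Module.Free (MonoidAlgebra (PowerSeries ℤ_[p]) G) N]
    [Module.Finite (MonoidAlgebra (PowerSeries ℤ_[p]) G) N]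
    (d : M →ₗ[MonoidAlgebra (PowerSeries ℤ_[p]) G] N)
    (hker : Module.IsTorsion (PowerSeries ℤ_[p])
      (Submodule.restrictScalars (PowerSeries ℤ_[p]) (LinearMap.ker d)))
    (hcoker : Module.IsTorsion (PowerSeries ℤ_[p])
      (N ⧸ Submodule.restrictScalars (PowerSeries ℤ_[p]) (LinearMap.range d))) :
    Module.rank (MonoidAlgebra (PowerSeries ℤ_[p]) G) M =
        Module.rank (MonoidAlgebra (PowerSeries ℤ_[p]) G) N ∧
      (Module.Finite ℤ_[p] (N ⧸ Submodule.restrictScalars ℤ_[p] (LinearMap.range d)) →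
        LinearMap.ker d = ⊥) := by
  classical
  set Λ := PowerSeries ℤ_[p] with hΛ
  set R := MonoidAlgebra Λ G with hR
  letI bR : Module.Basis G Λ R := MonoidAlgebra.basis G Λ
  let bM := Module.Free.chooseBasis R M
  let bN := Module.Free.chooseBasis R N
  haveI : Fintype (Module.Free.ChooseBasisIndex R M) := Fintype.ofFinite _
  haveI : Fintype (Module.Free.ChooseBasisIndex R N) := Fintype.ofFinite _
  let bΛM : Module.Basis (G × Module.Free.ChooseBasisIndex R M) Λ M := bR.smulTower bM
  let bΛN : Module.Basis (G × Module.Free.ChooseBasisIndex R N) Λ N := bR.smulTower bN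
  -- rank over Λ agrees
  have e1 : Module.rank Λ M
      = Module.rank Λ ((LinearMap.range d).restrictScalars Λ) := by
    have h := rank_quotient_add_rank_of_isDomain (R := Λ)
      ((LinearMap.ker d).restrictScalars Λ)
    have hz : Module.rank Λ ((LinearMap.ker d).restrictScalars Λ) = 0 :=
      rank_eq_zero_iff_isTorsion.mpr hker
    rw [hz, add_zero] at h
    rw [← h]
    exact ((d.restrictScalars Λ).quotKerEquivRange).rank_eq
  have e2 : Module.rank Λ N
      = Module.rank Λ ((LinearMap.range d).restrictScalars Λ) := by
    have h := rank_quotient_add_rank_of_isDomain (R := Λ)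
      ((LinearMap.range d).restrictScalars Λ)
    have hz : Module.rank Λ (N ⧸ (LinearMap.range d).restrictScalars Λ) = 0 :=
      rank_eq_zero_iff_isTorsion.mpr hcoker
    rw [hz, zero_add] at h
    exact h.symm
  have hfr : Module.finrank Λ M = Module.finrank Λ N := by
    simp only [Module.finrank]
    rw [e1, e2]
  have hM : Module.finrank Λ M
      = Fintype.card G * Fintype.card (Module.Free.ChooseBasisIndex R M) := by
    rw [Module.finrank_eq_card_basis bΛM, Fintype.card_prod]
  have hN : Module.finrank Λ N
      = Fintype.card G * Fintype.card (Module.Free.ChooseBasisIndex R N) := by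
    rw [Module.finrank_eq_card_basis bΛN, Fintype.card_prod]
  have hcard : Fintype.card (Module.Free.ChooseBasisIndex R M)
      = Fintype.card (Module.Free.ChooseBasisIndex R N) :=
    Nat.eq_of_mul_eq_mul_left Fintype.card_pos (by rw [← hM, ← hN, hfr])
  refine ⟨((bM.equiv bN (Fintype.equivOfCardEq hcard)).rank_eq), fun _ => ?_⟩
  haveI : Module.IsTorsionFree Λ M := bΛM.isTorsionFree
  rw [eq_bot_iff]
  intro x hx
  obtain ⟨a, ha⟩ := @hker ⟨x, hx⟩
  have h0 : (a : Λ) • x = 0 := congrArg Subtype.val ha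
  rcases smul_eq_zero.mp h0 with h | h
  · exact absurd h (nonZeroDivisors.coe_ne_zero a)
  · simpa [h] using Submodule.zero_mem ⊥
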